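/- Let s ≥ 1 be a real number. There exists a constant C > 0 such that for all functions f1, f2, f3 : ℤ → [0,∞), ( Σ_{k∈ℤ} ⟨k⟩^{2s} ( Σ_{k1-k2+k3=k} ⟨k⟩^{-1} ⟨max(|k1|,|k2|,|k3|)⟩^{-1} f1(k1) f2(k2) f3(k3) )^2 )^{1/2} ≤ C · ‖⟨·⟩^{s-2} f3‖_{l^2} · ‖⟨·⟩^s f1‖_{l^2} · ‖⟨·⟩^s f2‖_{l^2}, where ⟨k⟩ = (1+k^2)^{1/2} (and all norms are allowed to be infinite). -/

import Mathlib

open scoped ENNReal NNReal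

/-- The Japanese bracket `⟨k⟩ = (1+k^2)^{1/2}`. -/
noncomputable def jb (k : ℤ) : ℝ := Real.sqrt (1 + (k : ℝ) ^ 2)

/-- The `l^2_s` norm `‖⟨·⟩^s f‖_{l^2}`, valued in `ℝ≥0∞` (possibly infinite). -/
noncomputable def sobNorm (s : ℝ) (f : ℤ → ℝ≥0) : ℝ≥0∞ :=
  (∑' k : ℤ, ENNReal.ofReal (jb k ^ (2 * s)) * (f k : ℝ≥0∞) ^ 2) ^ ((1 : ℝ) / 2)

/-!
Write `a, b, c = k - a + b` for the three frequencies and `m = max (|a|, |b|, |c|)`. Then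
`⟨k⟩ ≤ 3⟨m⟩` and `⟨c⟩ ≤ ⟨m⟩ ≤ ⟨a⟩⟨b⟩⟨c⟩`, whence
`⟨k⟩^(s-1) ⟨m⟩⁻¹ ≤ 3^(s-1) ⟨a⟩^(s-1) ⟨b⟩^(s-1) ⟨c⟩^(s-2)`. So the `k`-th summand, weighted by
`⟨k⟩^s`, is dominated by `3^(s-1) ⟨a⟩⁻¹⟨b⟩⁻¹ · g₁(a) g₂(b) g₃(c)` with `g₁ = ⟨·⟩^s f₁`,
`g₂ = ⟨·⟩^s f₂`, `g₃ = ⟨·⟩^(s-2) f₃`. Cauchy–Schwarz in `(a, b)` splits off the finite factor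
`∑ ⟨a⟩⁻²⟨b⟩⁻²`, and the remaining sum of squares over `k` factors as `‖g₁‖² ‖g₂‖² ‖g₃‖²`,
since `c` runs over `ℤ` as `k` does.
-/

lemma jb_pos (k : ℤ) : 0 < jb k := Real.sqrt_pos.2 (by positivity)

lemma one_le_jb (k : ℤ) : 1 ≤ jb k := Real.one_le_sqrt.2 (by nlinarith [sq_nonneg (k : ℝ)])

lemma jb_sq (k : ℤ) : jb k ^ 2 = 1 + (k : ℝ) ^ 2 := Real.sq_sqrt (by positivity)

lemma jb_abs (k : ℤ) : jb |k| = jb k := by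
  simp only [jb, Int.cast_abs, sq_abs]

lemma jb_le_mul_of_abs_le {k m : ℤ} {K : ℝ} (hK : 1 ≤ K) (h : |(k : ℝ)| ≤ K * |(m : ℝ)|) :
    jb k ≤ K * jb m := by
  have hkm : (k : ℝ) ^ 2 ≤ K ^ 2 * (m : ℝ) ^ 2 := by
    rw [← sq_abs (k : ℝ), ← sq_abs (m : ℝ), ← mul_pow]
    exact pow_le_pow_left₀ (abs_nonneg _) h 2
  rw [jb, Real.sqrt_le_iff, mul_pow, jb_sq]
  exact ⟨mul_nonneg (by linarith) (jb_pos m).le, by nlinarith⟩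

lemma jb_le_jb_of_abs_le {i j : ℤ} (h : |i| ≤ |j|) : jb i ≤ jb j := by
  have hij : (i : ℝ) ^ 2 ≤ (j : ℝ) ^ 2 := sq_le_sq.2 (by exact_mod_cast h)
  exact Real.sqrt_le_sqrt (by linarith)

lemma summable_inv_jb_sq : Summable fun n : ℤ => (jb n ^ 2)⁻¹ := by
  refine (Real.summable_one_div_int_pow.2 one_lt_two).of_norm_bounded_eventually ?_
  filter_upwards [Filter.eventually_cofinite_ne 0] with n hn
  rw [Real.norm_of_nonneg (by positivity), one_div, jb_sq]
  gcongr
  linarith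

lemma jb_le_jb_max_abs (a b c : ℤ) : jb c ≤ jb (max (max |a| |b|) |c|) :=
  jb_le_jb_of_abs_le ((le_max_right _ _).trans (le_abs_self _))

lemma jb_max_abs_le_mul (a b c : ℤ) : jb (max (max |a| |b|) |c|) ≤ jb a * jb b * jb c := by
  have ha := one_le_jb a
  have hb := one_le_jb b
  have hc := one_le_jb c
  have hab : 1 ≤ jb a * jb b := one_le_mul_of_one_le_of_one_le ha hb
  rcases max_choice (max |a| |b|) |c| with h | h <;> rw [h]
  · rcases max_choice |a| |b| with h' | h' <;> rw [h', jb_abs] <;> nlinarith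
  · rw [jb_abs]; nlinarith

lemma jb_le_three_mul_jb_max_abs (k a b : ℤ) :
    jb k ≤ 3 * jb (max (max |a| |b|) |k - a + b|) := by
  set m := max (max |a| |b|) |k - a + b|
  have hk : |k| ≤ 3 * |m| := by
    have h1 : |a| ≤ m := (le_max_left _ _).trans (le_max_left _ _)
    have h2 : |b| ≤ m := (le_max_right _ _).trans (le_max_left _ _)
    have h3 : |k - a + b| ≤ m := le_max_right _ _
    have : |k| ≤ |a| + |b| + |k - a + b| := by
      calc |k| = |a - b + (k - a + b)| := by ring_nf
        _ ≤ |a - b| + |k - a + b| := abs_add_le _ _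
        _ ≤ |a| + |b| + |k - a + b| := by gcongr; exact abs_sub _ _
    linarith [le_abs_self m]
  exact jb_le_mul_of_abs_le (by norm_num) (by exact_mod_cast hk)

lemma rpow_mul_inv_mul_inv_le {s K x μ a b c : ℝ} (hs : 1 ≤ s) (hK : 0 ≤ K) (ha : 0 < a)
    (hb : 0 < b) (hc : 0 < c) (hx : 0 < x) (hxμ : x ≤ K * μ) (hcμ : c ≤ μ) (hμ : μ ≤ a * b * c) :
    x ^ s * (x⁻¹ * μ⁻¹) ≤ K ^ (s - 1) * (a⁻¹ * b⁻¹) * (a ^ s * (b ^ s * c ^ (s - 2))) := by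
  have hs1 : 0 ≤ s - 1 := by linarith
  have hμ0 : 0 < μ := hc.trans_le hcμ
  have hlhs : x ^ s * (x⁻¹ * μ⁻¹) = x ^ (s - 1) * μ⁻¹ := by
    rw [Real.rpow_sub_one hx.ne']; ring
  have hrhs : K ^ (s - 1) * (a⁻¹ * b⁻¹) * (a ^ s * (b ^ s * c ^ (s - 2)))
      = K ^ (s - 1) * (a * b * c) ^ (s - 1) * c⁻¹ := by
    rw [Real.mul_rpow (by positivity) hc.le, Real.mul_rpow ha.le hb.le, Real.rpow_sub_one ha.ne',
      Real.rpow_sub_one hb.ne', show s - 2 = s - 1 - 1 by ring, Real.rpow_sub_one hc.ne',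
      Real.rpow_sub_one hc.ne']
    ring
  rw [hlhs, hrhs]
  calc x ^ (s - 1) * μ⁻¹ ≤ (K * μ) ^ (s - 1) * c⁻¹ := by gcongr
    _ = K ^ (s - 1) * μ ^ (s - 1) * c⁻¹ := by rw [Real.mul_rpow hK hμ0.le]
    _ ≤ K ^ (s - 1) * (a * b * c) ^ (s - 1) * c⁻¹ := by gcongr

namespace ENNReal

theorem tsum_mul_sq_le {ι : Type*} (f g : ι → ℝ≥0∞) :
    (∑' i, f i * g i) ^ 2 ≤ (∑' i, f i ^ 2) * ∑' i, g i ^ 2 := by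
  -- Hölder for the counting measure; under the discrete σ-algebra everything is measurable.
  let _ : MeasurableSpace ι := ⊤
  have h := lintegral_mul_le_Lp_mul_Lq MeasureTheory.Measure.count Real.HolderConjugate.two_two
    measurable_from_top.aemeasurable measurable_from_top.aemeasurable (f := f) (g := g)
  simp only [Pi.mul_apply, MeasureTheory.lintegral_count, rpow_two] at h
  calc _ ≤ ((∑' i, f i ^ 2) ^ (1 / 2 : ℝ) * (∑' i, g i ^ 2) ^ (1 / 2 : ℝ)) ^ 2 := by gcongr
    _ = _ := by
      rw [mul_pow, ← rpow_two, ← rpow_two, ← rpow_mul, ← rpow_mul]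
      norm_num

theorem tsum_prod_mul {α β : Type*} (f : α → ℝ≥0∞) (g : β → ℝ≥0∞) :
    ∑' p : α × β, f p.1 * g p.2 = (∑' a, f a) * ∑' b, g b := by
  simp_rw [ENNReal.tsum_prod', ENNReal.tsum_mul_left, ENNReal.tsum_mul_right]

theorem tsum_tsum_mul_mul_shift {A : Type*} [AddCommGroup A] (F G H : A → ℝ≥0∞) :
    ∑' k, ∑' p : A × A, F p.1 * G p.2 * H (k - p.1 + p.2)
      = (∑' a, F a) * (∑' b, G b) * ∑' c, H c := by
  have hshift (p : A × A) : ∑' k, H (k - p.1 + p.2) = ∑' c, H c := by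
    rw [← (Equiv.addRight (p.2 - p.1)).tsum_eq H]
    exact tsum_congr fun k => by simp only [Equiv.coe_addRight]; abel_nf
  rw [ENNReal.tsum_comm]
  simp_rw [ENNReal.tsum_mul_left, hshift, ENNReal.tsum_mul_right, tsum_prod_mul]

theorem tsum_sq_tsum_mul_shift_le {A : Type*} [AddCommGroup A] (M : A × A → ℝ≥0∞)
    (g₁ g₂ g₃ : A → ℝ≥0∞) :
    ∑' k, (∑' p : A × A, M p * (g₁ p.1 * (g₂ p.2 * g₃ (k - p.1 + p.2)))) ^ 2
      ≤ (∑' p, M p ^ 2) * ((∑' a, g₁ a ^ 2) * (∑' b, g₂ b ^ 2) * ∑' c, g₃ c ^ 2) := by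
  calc _ ≤ ∑' k, (∑' p, M p ^ 2) * ∑' p : A × A, (g₁ p.1 * (g₂ p.2 * g₃ (k - p.1 + p.2))) ^ 2 :=
        ENNReal.tsum_le_tsum fun k => tsum_mul_sq_le _ _
    _ = _ := by
      rw [ENNReal.tsum_mul_left]
      congr 1
      simp_rw [mul_pow, ← mul_assoc]
      exact tsum_tsum_mul_mul_shift (fun a => g₁ a ^ 2) (fun b => g₂ b ^ 2) (fun c => g₃ c ^ 2)

end ENNReal

noncomputable def weighted (t : ℝ) (f : ℤ → ℝ≥0) (k : ℤ) : ℝ≥0∞ :=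
  ENNReal.ofReal (jb k ^ t) * f k

lemma ofReal_jb_rpow_two_mul (t : ℝ) (k : ℤ) :
    ENNReal.ofReal (jb k ^ (2 * t)) = ENNReal.ofReal (jb k ^ t) ^ 2 := by
  rw [← ENNReal.ofReal_pow (Real.rpow_nonneg (jb_pos k).le _), mul_comm,
    Real.rpow_mul (jb_pos k).le, Real.rpow_two]

lemma sobNorm_eq (t : ℝ) (f : ℤ → ℝ≥0) :
    sobNorm t f = (∑' k, weighted t f k ^ 2) ^ (1 / 2 : ℝ) := by
  simp only [sobNorm, weighted, mul_pow, ofReal_jb_rpow_two_mul]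

lemma jb_rpow_mul_summand_le {s : ℝ} (hs : 1 ≤ s) (f₁ f₂ f₃ : ℤ → ℝ≥0) (k : ℤ) (p : ℤ × ℤ) :
    ENNReal.ofReal (jb k ^ s) *
      (ENNReal.ofReal ((jb k)⁻¹ * (jb (max (max |p.1| |p.2|) |k - p.1 + p.2|))⁻¹) *
        f₁ p.1 * f₂ p.2 * f₃ (k - p.1 + p.2))
    ≤ ENNReal.ofReal (3 ^ (s - 1)) * (ENNReal.ofReal (jb p.1)⁻¹ * ENNReal.ofReal (jb p.2)⁻¹) *
      (weighted s f₁ p.1 * (weighted s f₂ p.2 * weighted (s - 2) f₃ (k - p.1 + p.2))) := by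
  obtain ⟨a, b⟩ := p
  set c := k - a + b
  set μ := jb (max (max |a| |b|) |c|)
  have hbound := rpow_mul_inv_mul_inv_le hs (by norm_num) (jb_pos a) (jb_pos b) (jb_pos c)
    (jb_pos k) (jb_le_three_mul_jb_max_abs k a b) (jb_le_jb_max_abs a b c) (jb_max_abs_le_mul a b c)
  have hnn (x : ℤ) (t : ℝ) : 0 ≤ jb x ^ t := Real.rpow_nonneg (jb_pos x).le t
  calc _ = ENNReal.ofReal (jb k ^ s * ((jb k)⁻¹ * μ⁻¹)) * (f₁ a * (f₂ b * f₃ c)) := by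
        rw [ENNReal.ofReal_mul (hnn k s)]; ring
    _ ≤ ENNReal.ofReal (3 ^ (s - 1) * ((jb a)⁻¹ * (jb b)⁻¹) *
          (jb a ^ s * (jb b ^ s * jb c ^ (s - 2)))) * (f₁ a * (f₂ b * f₃ c)) := by
        gcongr
    _ = _ := by
        have hinv (x : ℤ) : 0 ≤ (jb x)⁻¹ := inv_nonneg.2 (jb_pos x).le
        rw [ENNReal.ofReal_mul (mul_nonneg (by positivity) (mul_nonneg (hinv a) (hinv b))),
          ENNReal.ofReal_mul (by positivity), ENNReal.ofReal_mul (hinv a),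
          ENNReal.ofReal_mul (hnn a s), ENNReal.ofReal_mul (hnn b s)]
        simp only [weighted]
        ring

lemma tsum_ofReal_inv_jb_sq :
    ∑' n : ℤ, ENNReal.ofReal (jb n)⁻¹ ^ 2 = ENNReal.ofReal (∑' n : ℤ, (jb n ^ 2)⁻¹) := by
  rw [ENNReal.ofReal_tsum_of_nonneg (fun n => inv_nonneg.2 (sq_nonneg _)) summable_inv_jb_sq]
  exact tsum_congr fun n => by rw [← ENNReal.ofReal_pow (inv_nonneg.2 (jb_pos n).le), inv_pow]

lemma tsum_sq_ofReal_mul_inv_jb_mul_inv_jb {K : ℝ} (hK : 0 ≤ K) :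
    ∑' p : ℤ × ℤ, (ENNReal.ofReal K * (ENNReal.ofReal (jb p.1)⁻¹ * ENNReal.ofReal (jb p.2)⁻¹)) ^ 2
      = ENNReal.ofReal (K * ∑' n : ℤ, (jb n ^ 2)⁻¹) ^ 2 := by
  simp_rw [mul_pow, ENNReal.tsum_mul_left]
  rw [ENNReal.tsum_prod_mul (fun n : ℤ => ENNReal.ofReal (jb n)⁻¹ ^ 2)
    (fun n : ℤ => ENNReal.ofReal (jb n)⁻¹ ^ 2), tsum_ofReal_inv_jb_sq, ENNReal.ofReal_mul hK,
    mul_pow, sq (ENNReal.ofReal (∑' n : ℤ, (jb n ^ 2)⁻¹))]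

theorem stmt_15 (s : ℝ) (hs : 1 ≤ s) :
    ∃ C : ℝ, 0 < C ∧ ∀ f1 f2 f3 : ℤ → ℝ≥0,
      (∑' k : ℤ, ENNReal.ofReal (jb k ^ (2 * s)) *
          (∑' p : ℤ × ℤ,
              ENNReal.ofReal ((jb k)⁻¹ * (jb (max (max |p.1| |p.2|) |k - p.1 + p.2|))⁻¹) *
                (f1 p.1 : ℝ≥0∞) * (f2 p.2 : ℝ≥0∞) * (f3 (k - p.1 + p.2) : ℝ≥0∞)) ^ 2) ^
            ((1 : ℝ) / 2)
        ≤ ENNReal.ofReal C * (sobNorm (s - 2) f3 * (sobNorm s f1 * sobNorm s f2)) := by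
  have hT : 0 < ∑' n : ℤ, (jb n ^ 2)⁻¹ :=
    summable_inv_jb_sq.tsum_pos (fun n => inv_nonneg.2 (sq_nonneg _)) 0
      (inv_pos.2 (pow_pos (jb_pos 0) 2))
  have h3 : (0 : ℝ) ≤ 3 ^ (s - 1) := by positivity
  refine ⟨3 ^ (s - 1) * ∑' n : ℤ, (jb n ^ 2)⁻¹, by positivity, fun f₁ f₂ f₃ => ?_⟩
  simp_rw [sobNorm_eq, ofReal_jb_rpow_two_mul, ← mul_pow, ← ENNReal.tsum_mul_left]
  calc _ ≤ (∑' k, (∑' p : ℤ × ℤ,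
          ENNReal.ofReal (3 ^ (s - 1)) * (ENNReal.ofReal (jb p.1)⁻¹ * ENNReal.ofReal (jb p.2)⁻¹) *
            (weighted s f₁ p.1 * (weighted s f₂ p.2 * weighted (s - 2) f₃ (k - p.1 + p.2)))) ^ 2) ^
            (1 / 2 : ℝ) := by
        gcongr (∑' k, ?_ ^ 2) ^ _ with k
        exact ENNReal.tsum_le_tsum fun p => jb_rpow_mul_summand_le hs f₁ f₂ f₃ k p
    _ ≤ (ENNReal.ofReal (3 ^ (s - 1) * ∑' n : ℤ, (jb n ^ 2)⁻¹) ^ 2 *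
          ((∑' a, weighted s f₁ a ^ 2) * (∑' b, weighted s f₂ b ^ 2) *
            ∑' c, weighted (s - 2) f₃ c ^ 2)) ^ (1 / 2 : ℝ) := by
        rw [← tsum_sq_ofReal_mul_inv_jb_mul_inv_jb h3]
        gcongr
        exact ENNReal.tsum_sq_tsum_mul_shift_le _ _ _ _
    _ = _ := by
        simp only [one_div, ENNReal.mul_rpow_of_nonneg _ _ (by norm_num : (0 : ℝ) ≤ 2⁻¹)]
        rw [← ENNReal.rpow_two, ENNReal.rpow_rpow_inv two_ne_zero]
        ring
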